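/- Let 0 < p ≤ 1 and p < s ≤ ∞. Then BL^{p,s}_{|x|^0}(ℝⁿ) = L^p(ℝⁿ) as sets, with equivalent quasinorms. -/

import Mathlib

/-!
A `(p,s,0)`-block has `L^p` quasinorm at most `1` by Hölder's inequality on its ball, so the
`p`-triangle inequality `‖∑ gₖ‖ₚᵖ ≤ ∑ ‖gₖ‖ₚᵖ` (valid for `p ≤ 1`) gives `‖f‖ₚᵖ ≤ ∑ |λₖ|ᵖ` for every
block decomposition `f = ∑ λₖ aₖ`.

Conversely, cut `f ∈ Lᵖ` along the dyadic shells `{2ʲ < |f| ≤ 2ʲ⁺¹}`. By the Lebesgue density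
theorem and the Besicovitch covering theorem, almost all of each shell is covered by disjoint balls
in which the shell has density at least `1/2`. On each such piece `S ⊆ B` the function is
comparable to a constant `c`, so `f 1_S` is `λ` times a block with
`λᵖ = cᵖ |S|^{p/s} |B|^{1 - p/s} ≤ 4 ∫_S |f|ᵖ`; summing over the pieces gives `∑ |λ|ᵖ ≤ 4 ‖f‖ₚᵖ`.
-/

open MeasureTheory Metric ENNReal Filter
open scoped ENNReal NNReal

noncomputable section

abbrev Rn (n : ℕ) := EuclideanSpace ℝ (Fin n)

/-- A `(p,s,α)`-block: supported in a closed ball `B(x₀,r)` with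
`‖a‖_{L^s} ≤ |B|^{-α/(pn)-1/p+1/s}` (with `1/s = 0` when `s = ∞`). -/
def IsBlock (n : ℕ) (p : ℝ) (s : ℝ≥0∞) (α : ℝ) (a : Rn n → ℝ) : Prop :=
  Measurable a ∧
  ∃ x₀ : Rn n, ∃ r : ℝ, 0 < r ∧ (∀ x, x ∉ closedBall x₀ r → a x = 0) ∧
    eLpNorm a s volume ≤
      ENNReal.ofReal ((volume (closedBall x₀ r)).toReal ^ (-α / (p * n) - 1 / p + s.toReal⁻¹))

/-- A decomposition `f = Σ l k • a k` (a.e. convergence) into `(p,s,α)`-blocks with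
`Σ |l k| ^ min p 1 < ∞`. -/
def IsBLDecomp (n : ℕ) (p : ℝ) (s : ℝ≥0∞) (α : ℝ)
    (f : Rn n → ℝ) (l : ℕ → ℝ) (a : ℕ → Rn n → ℝ) : Prop :=
  (∀ k, IsBlock n p s α (a k)) ∧ Summable (fun k => |l k| ^ min p 1) ∧
  (∀ᵐ x : Rn n ∂volume, HasSum (fun k => l k * a k x) (f x))

/-- Membership in the block space `BL^{p,s}_{|x|^α}`. -/
def MemBL (n : ℕ) (p : ℝ) (s : ℝ≥0∞) (α : ℝ) (f : Rn n → ℝ) : Prop :=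
  ∃ l a, IsBLDecomp n p s α f l a

/-- The quasinorm of `BL^{p,s}_{|x|^α}`:
`inf (Σ |l k| ^ min p 1)^(1/min p 1)` over all block decompositions. -/
def BLnorm (n : ℕ) (p : ℝ) (s : ℝ≥0∞) (α : ℝ) (f : Rn n → ℝ) : ℝ :=
  sInf { c | ∃ l a, IsBLDecomp n p s α f l a ∧
    c = (∑' k, |l k| ^ min p 1) ^ (min p 1)⁻¹ }

open scoped Topology
open Function

theorem ENNReal.rpow_tsum_le_tsum_rpow {ι : Type*} (b : ι → ℝ≥0∞) {q : ℝ} (hq : 0 < q)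
    (hq1 : q ≤ 1) : (∑' i, b i) ^ q ≤ ∑' i, b i ^ q := by
  classical
  have finset_le (F : Finset ι) : (∑ i ∈ F, b i) ^ q ≤ ∑ i ∈ F, b i ^ q := by
    induction F using Finset.induction with
    | empty => simp [ENNReal.zero_rpow_of_pos hq]
    | insert i F hi ih =>
      rw [Finset.sum_insert hi, Finset.sum_insert hi]
      exact (ENNReal.rpow_add_le_add_rpow _ _ hq.le hq1).trans (by gcongr)
  calc (∑' i, b i) ^ q = ⨆ F : Finset ι, (∑ i ∈ F, b i) ^ q := by
        rw [ENNReal.tsum_eq_iSup_sum]; exact (ENNReal.orderIsoRpow q hq).map_iSup _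
    _ ≤ ∑' i, b i ^ q := iSup_le fun F => (finset_le F).trans (ENNReal.sum_le_tsum F)

theorem ENNReal.le_two_mul_of_inv_two_lt_div {a b : ℝ≥0∞} (h : 2⁻¹ < a / b) : b ≤ 2 * a := by
  by_contra! hab
  refine h.not_ge (ENNReal.div_le_of_le_mul ?_)
  calc a = 2⁻¹ * (2 * a) := by
        rw [← mul_assoc, ENNReal.inv_mul_cancel two_ne_zero ofNat_ne_top, one_mul]
    _ ≤ 2⁻¹ * b := by gcongr

theorem ENNReal.toReal_inv_mul_le_one_of_ofReal_lt {p : ℝ} {s : ℝ≥0∞} (hp : 0 ≤ p)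
    (hps : ENNReal.ofReal p < s) : s.toReal⁻¹ * p ≤ 1 := by
  rcases eq_or_ne s ∞ with rfl | hs
  · simp
  have hlt : p < s.toReal := (ENNReal.ofReal_lt_iff_lt_toReal hp hs).1 hps
  rw [inv_mul_le_iff₀ (hp.trans_lt hlt), mul_one]
  exact hlt.le

theorem Real.rpow_le_two_mul_rpow {c y p : ℝ} (hcy : c / 2 ≤ y) (hc : 0 ≤ c) (hp : 0 ≤ p)
    (hp1 : p ≤ 1) : c ^ p ≤ 2 * y ^ p := by
  calc c ^ p = 2 ^ p * (c / 2) ^ p := by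
        rw [← Real.mul_rpow zero_le_two (by positivity), mul_div_cancel₀ _ two_ne_zero]
    _ ≤ 2 ^ (1 : ℝ) * y ^ p := by
        gcongr
        exact one_le_two
    _ = 2 * y ^ p := by rw [Real.rpow_one]

theorem Real.mul_rpow_mul_rpow_rpow_le {c u v σ p : ℝ} (hc : 0 ≤ c) (hu : 0 < u) (hv : 0 ≤ v)
    (hvu : v ≤ 2 * u) (hp : 0 < p) (hσ : 0 ≤ σ) (hσp : σ * p ≤ 1) :
    (c * u ^ σ * v ^ (1 / p - σ)) ^ p ≤ 2 * c ^ p * u := by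
  have hexp : (1 / p - σ) * p = 1 - σ * p := by field_simp
  rw [Real.mul_rpow (by positivity) (by positivity), Real.mul_rpow hc (by positivity),
    ← Real.rpow_mul hu.le, ← Real.rpow_mul hv, hexp]
  calc c ^ p * u ^ (σ * p) * v ^ (1 - σ * p)
      ≤ c ^ p * u ^ (σ * p) * (2 ^ (1 - σ * p) * u ^ (1 - σ * p)) := by
        rw [← Real.mul_rpow zero_le_two hu.le]
        gcongr
    _ ≤ c ^ p * u ^ (σ * p) * (2 ^ (1 : ℝ) * u ^ (1 - σ * p)) := by
        gcongr
        · exact one_le_two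
        · nlinarith
    _ = 2 * c ^ p * u := by
        rw [Real.rpow_one, show c ^ p * u ^ (σ * p) * (2 * u ^ (1 - σ * p))
          = 2 * c ^ p * (u ^ (σ * p) * u ^ (1 - σ * p)) by ring, ← Real.rpow_add hu]
        simp

section Lebesgue

variable {X : Type*} [MeasurableSpace X] {μ : Measure X}

theorem eLpNorm_ofReal_rpow_eq_lintegral {E : Type*} [NormedAddCommGroup E] {f : X → E} {p : ℝ}
    (hp : 0 < p) : eLpNorm f (ENNReal.ofReal p) μ ^ p = ∫⁻ x, ‖f x‖ₑ ^ p ∂μ := by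
  rw [eLpNorm_eq_eLpNorm' (by simpa using hp) ofReal_ne_top, toReal_ofReal hp.le,
    lintegral_rpow_enorm_eq_rpow_eLpNorm' hp]

theorem eLpNorm_rpow_le_tsum_of_hasSum {ι E : Type*} [Countable ι] [NormedAddCommGroup E]
    {f : X → E} {g : ι → X → E} (hg : ∀ i, AEStronglyMeasurable (g i) μ) {p : ℝ} (hp : 0 < p)
    (hp1 : p ≤ 1) (hfg : ∀ᵐ x ∂μ, HasSum (fun i => g i x) (f x)) :
    eLpNorm f (ENNReal.ofReal p) μ ^ p ≤ ∑' i, eLpNorm (g i) (ENNReal.ofReal p) μ ^ p := by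
  simp only [eLpNorm_ofReal_rpow_eq_lintegral hp]
  calc ∫⁻ x, ‖f x‖ₑ ^ p ∂μ ≤ ∫⁻ x, ∑' i, ‖g i x‖ₑ ^ p ∂μ := by
        refine lintegral_mono_ae (hfg.mono fun x hx => ?_)
        rw [← hx.tsum_eq]
        exact (ENNReal.rpow_le_rpow enorm_tsum_le_tsum_enorm hp.le).trans
          (ENNReal.rpow_tsum_le_tsum_rpow _ hp hp1)
    _ = ∑' i, ∫⁻ x, ‖g i x‖ₑ ^ p ∂μ := lintegral_tsum fun i => (hg i).enorm.pow_const p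

/-- `c |S|^σ |B|^(1/p - σ)`, with `σ = 1/s`, is the coefficient that makes `f 1_S` a block on
`B` when `|f| ≤ c` on `S`. -/
theorem ofReal_rpow_coeff_le_four_mul_setLIntegral {p σ : ℝ} (hp : 0 < p) (hp1 : p ≤ 1)
    (hσ : 0 ≤ σ) (hσp : σ * p ≤ 1)
    {f : X → ℝ} {S B : Set X} (hS : MeasurableSet S) (hS0 : μ S ≠ 0) (hSt : μ S ≠ ∞)
    (hBS : μ B ≤ 2 * μ S) {c : ℝ} (hc : 0 ≤ c) (hfc : ∀ x ∈ S, c / 2 ≤ |f x|) :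
    ENNReal.ofReal ((c * (μ S).toReal ^ σ * (μ B).toReal ^ (1 / p - σ)) ^ p)
      ≤ 4 * ∫⁻ x in S, ‖f x‖ₑ ^ p ∂μ := by
  have hBS' : (μ B).toReal ≤ 2 * (μ S).toReal := by
    simpa using toReal_mono (mul_ne_top ofNat_ne_top hSt) hBS
  have hpoint : ∀ x ∈ S, ENNReal.ofReal (c ^ p) ≤ 2 * ‖f x‖ₑ ^ p := fun x hx => by
    rw [Real.enorm_eq_ofReal_abs, ENNReal.ofReal_rpow_of_nonneg (abs_nonneg _) hp.le,
      ← ofReal_ofNat, ← ENNReal.ofReal_mul zero_le_two]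
    exact ofReal_le_ofReal (Real.rpow_le_two_mul_rpow (hfc x hx) hc hp.le hp1)
  calc ENNReal.ofReal ((c * (μ S).toReal ^ σ * (μ B).toReal ^ (1 / p - σ)) ^ p)
      ≤ ENNReal.ofReal (2 * c ^ p * (μ S).toReal) := ofReal_le_ofReal
        (Real.mul_rpow_mul_rpow_rpow_le hc (toReal_pos hS0 hSt) toReal_nonneg hBS' hp hσ hσp)
    _ = 2 * ∫⁻ _ in S, ENNReal.ofReal (c ^ p) ∂μ := by
        rw [setLIntegral_const, ENNReal.ofReal_mul (by positivity), ENNReal.ofReal_mul zero_le_two,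
          ofReal_toReal hSt, ofReal_ofNat, mul_assoc]
    _ ≤ 2 * ∫⁻ x in S, 2 * ‖f x‖ₑ ^ p ∂μ := by gcongr 1; exact setLIntegral_mono' hS hpoint
    _ = 4 * ∫⁻ x in S, ‖f x‖ₑ ^ p ∂μ := by
        rw [lintegral_const_mul' _ _ ofNat_ne_top, ← mul_assoc]
        norm_num

end Lebesgue

theorem hasSum_indicator_of_pairwise_disjoint {X ι M : Type*} [AddCommMonoid M]
    [TopologicalSpace M] {S : ι → Set X} (hS : Pairwise (Disjoint on S)) (f : X → M) {x : X}
    (hx : f x ≠ 0 → x ∈ ⋃ i, S i) : HasSum (fun i => (S i).indicator f x) (f x) := by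
  by_cases hxS : x ∈ ⋃ i, S i
  · obtain ⟨i, hi⟩ := Set.mem_iUnion.1 hxS
    rw [← Set.indicator_of_mem hi f]
    refine hasSum_single i fun j hji => Set.indicator_of_notMem ?_ f
    exact Set.disjoint_left.1 (hS hji.symm) hi
  · rw [not_imp_comm.1 hx hxS]
    convert hasSum_zero with i
    exact Set.indicator_of_notMem (fun h => hxS (Set.mem_iUnion.2 ⟨i, h⟩)) f

theorem pairwise_disjoint_sigma_inter {X ι : Type*} {κ : ι → Type*} {E : ι → Set X}
    {B : ∀ i, κ i → Set X} (hE : Pairwise (Disjoint on E)) (hB : ∀ i, Pairwise (Disjoint on B i)) :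
    Pairwise (Disjoint on fun k : (i : ι) × κ i => E k.1 ∩ B k.1 k.2) := by
  rintro ⟨i, q⟩ ⟨i', q'⟩ hne
  by_cases h : i = i'
  · subst h
    have hq : q ≠ q' := fun hq => hne (by rw [hq])
    exact (hB i hq).mono Set.inter_subset_right Set.inter_subset_right
  · exact (hE h).mono Set.inter_subset_left Set.inter_subset_left

theorem exists_disjoint_closedBall_covering_ae_of_half_density {α : Type*} [MetricSpace α]
    [MeasurableSpace α] [BorelSpace α] [SecondCountableTopology α] [HasBesicovitchCovering α]
    (μ : Measure α) [IsLocallyFiniteMeasure μ] (E : Set α) :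
    ∃ (t : Set α) (r : α → ℝ), t.Countable ∧ (∀ x ∈ t, 0 < r x) ∧
      (∀ x ∈ t, μ (closedBall x (r x)) ≤ 2 * μ (E ∩ closedBall x (r x))) ∧
      μ (E \ ⋃ x ∈ t, closedBall x (r x)) = 0 ∧ t.PairwiseDisjoint fun x => closedBall x (r x) := by
  set D := {x | Tendsto (fun ρ => μ (E ∩ closedBall x ρ) / μ (closedBall x ρ)) (𝓝[>] 0) (𝓝 1)}
  have hED : μ (E \ D) = 0 := by
    have h : μ (Dᶜ ∩ E) = 0 := le_antisymm ((Measure.le_restrict_apply _ _).trans_eq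
      (ae_iff.1 (Besicovitch.ae_tendsto_measure_inter_div μ E))) zero_le
    rwa [Set.sdiff_eq, Set.inter_comm]
  have hdense : ∀ x ∈ E ∩ D, ∀ δ > 0,
      ({ρ | μ (closedBall x ρ) ≤ 2 * μ (E ∩ closedBall x ρ)} ∩ Set.Ioo 0 δ).Nonempty := by
    rintro x ⟨-, hx : Tendsto _ _ _⟩ δ hδ
    obtain ⟨ρ, hρ, hρδ⟩ := ((hx.eventually (lt_mem_nhds (by norm_num : (2 : ℝ≥0∞)⁻¹ < 1))).and
      (Ioo_mem_nhdsGT hδ)).exists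
    exact ⟨ρ, ENNReal.le_two_mul_of_inv_two_lt_div hρ, hρδ⟩
  obtain ⟨t, r, ht, -, hr, hnull, hdisj⟩ := Besicovitch.exists_disjoint_closedBall_covering_ae μ _
    (E ∩ D) hdense (fun _ => 1) fun _ _ => one_pos
  refine ⟨t, r, ht, fun x hx => (hr x hx).2.1, fun x hx => (hr x hx).1, ?_, hdisj⟩
  refine measure_mono_null (fun x hx => ?_) (measure_union_null hED hnull)
  by_cases hxD : x ∈ D
  · exact Or.inr ⟨⟨hx.1, hxD⟩, hx.2⟩
  · exact Or.inl ⟨hx.1, hxD⟩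

section Blocks

variable {n : ℕ} {p : ℝ} {s : ℝ≥0∞}

theorem isBlock_zero (α : ℝ) : IsBlock n p s α 0 :=
  ⟨measurable_const, 0, 1, one_pos, fun _ _ => rfl, by simp⟩

theorem isBlock_inv_smul {α : ℝ} {g : Rn n → ℝ} (hg : Measurable g) {x₀ : Rn n} {r : ℝ}
    (hr : 0 < r) (hgB : ∀ x ∉ closedBall x₀ r, g x = 0) {M : ℝ} (hM : 0 < M)
    (hgM : eLpNorm g s volume ≤ ENNReal.ofReal M) :
    IsBlock n p s α
      ((M * (volume (closedBall x₀ r)).toReal ^ (α / (p * n) + 1 / p - s.toReal⁻¹))⁻¹ • g) := by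
  set V := (volume (closedBall x₀ r)).toReal
  have hV : 0 < V :=
    toReal_pos (measure_closedBall_pos volume x₀ hr).ne' measure_closedBall_lt_top.ne
  have hc : 0 < (M * V ^ (α / (p * n) + 1 / p - s.toReal⁻¹))⁻¹ := by positivity
  refine ⟨hg.const_smul _, x₀, r, hr, fun x hx => by simp [hgB x hx], ?_⟩
  calc eLpNorm ((M * V ^ (α / (p * n) + 1 / p - s.toReal⁻¹))⁻¹ • g) s volume
      ≤ ENNReal.ofReal (M * V ^ (α / (p * n) + 1 / p - s.toReal⁻¹))⁻¹ * ENNReal.ofReal M := by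
        rw [eLpNorm_const_smul, Real.enorm_of_nonneg hc.le]
        gcongr
    _ = ENNReal.ofReal (V ^ (-α / (p * n) - 1 / p + s.toReal⁻¹)) := by
        rw [← ENNReal.ofReal_mul hc.le, show -α / (p * n) - 1 / p + s.toReal⁻¹
          = -(α / (p * n) + 1 / p - s.toReal⁻¹) by ring, Real.rpow_neg hV.le]
        field_simp

theorem IsBlock.eLpNorm_le_one (hp : 0 < p) (hps : ENNReal.ofReal p < s) {a : Rn n → ℝ}
    (ha : IsBlock n p s 0 a) : eLpNorm a (ENNReal.ofReal p) volume ≤ 1 := by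
  obtain ⟨hma, x₀, r, hr, hsupp, hbound⟩ := ha
  set B := closedBall x₀ r
  have hB0 : volume B ≠ 0 := (measure_closedBall_pos volume x₀ hr).ne'
  have hBt : volume B ≠ ∞ := measure_closedBall_lt_top.ne
  have hsuppB : a.support ⊆ B := fun x hx => by_contra fun hxB => hx (hsupp x hxB)
  rw [← ENNReal.ofReal_rpow_of_pos (toReal_pos hB0 hBt), ofReal_toReal hBt] at hbound
  calc eLpNorm a (ENNReal.ofReal p) volume = eLpNorm a (ENNReal.ofReal p) (volume.restrict B) :=
        (eLpNorm_restrict_eq_of_support_subset hsuppB).symm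
    _ ≤ eLpNorm a s (volume.restrict B) * volume B ^ (1 / p - 1 / s.toReal) := by
        simpa [toReal_ofReal hp.le] using eLpNorm_le_eLpNorm_mul_rpow_measure_univ
          (μ := volume.restrict B) hps.le hma.aestronglyMeasurable
    _ ≤ volume B ^ (-0 / (p * n) - 1 / p + s.toReal⁻¹) * volume B ^ (1 / p - 1 / s.toReal) := by
        rw [eLpNorm_restrict_eq_of_support_subset hsuppB]
        gcongr
    _ = 1 := by
        rw [← ENNReal.rpow_add _ _ hB0 hBt]
        ring_nf
        exact ENNReal.rpow_zero

theorem IsBLDecomp.eLpNorm_rpow_le (hp : 0 < p) (hp1 : p ≤ 1) (hps : ENNReal.ofReal p < s)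
    {f : Rn n → ℝ} {l : ℕ → ℝ} {a : ℕ → Rn n → ℝ} (h : IsBLDecomp n p s 0 f l a) :
    eLpNorm f (ENNReal.ofReal p) volume ^ p ≤ ENNReal.ofReal (∑' k, |l k| ^ p) := by
  obtain ⟨hblock, hsum, hf⟩ := h
  rw [min_eq_left hp1] at hsum
  calc eLpNorm f (ENNReal.ofReal p) volume ^ p
      ≤ ∑' k, eLpNorm (l k • a k) (ENNReal.ofReal p) volume ^ p :=
        eLpNorm_rpow_le_tsum_of_hasSum (fun k => ((hblock k).1.const_smul _).aestronglyMeasurable)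
          hp hp1 hf
    _ ≤ ∑' k, ENNReal.ofReal (|l k| ^ p) := by
        gcongr with k
        rw [eLpNorm_const_smul, ENNReal.mul_rpow_of_nonneg _ _ hp.le, Real.enorm_eq_ofReal_abs,
          ENNReal.ofReal_rpow_of_nonneg (abs_nonneg _) hp.le]
        calc ENNReal.ofReal (|l k| ^ p) * eLpNorm (a k) (ENNReal.ofReal p) volume ^ p
            ≤ ENNReal.ofReal (|l k| ^ p) * 1 ^ p := by
              gcongr; exact (hblock k).eLpNorm_le_one hp hps
          _ = ENNReal.ofReal (|l k| ^ p) := by rw [ENNReal.one_rpow, mul_one]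
    _ = ENNReal.ofReal (∑' k, |l k| ^ p) :=
        (ENNReal.ofReal_tsum_of_nonneg (fun k => by positivity) hsum).symm

theorem exists_isBLDecomp_of_countable {ι : Type*} [Countable ι] {α : ℝ} (hp : p ≠ 0)
    {f : Rn n → ℝ} {lam : ι → ℝ} {A : ι → Rn n → ℝ} (hA : ∀ i, IsBlock n p s α (A i))
    (hlam : Summable fun i => |lam i| ^ min p 1)
    (hf : ∀ᵐ x, HasSum (fun i => lam i * A i x) (f x)) :
    ∃ l a, IsBLDecomp n p s α f l a ∧ ∑' k, |l k| ^ min p 1 = ∑' i, |lam i| ^ min p 1 := by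
  obtain ⟨e, he⟩ := Countable.exists_injective_nat ι
  have hq : min p 1 ≠ 0 := by
    rcases min_choice p 1 with h | h <;> rw [h] <;> simp [hp]
  have hterm (x : Rn n) : (fun k => extend e lam 0 k * extend e A 0 k x)
      = extend e (fun i => lam i * A i x) 0 := by
    ext k
    by_cases hk : ∃ i, e i = k
    · obtain ⟨i, rfl⟩ := hk
      simp only [he.extend_apply]
    · simp [extend_apply' _ _ _ hk]
  have hcoeff : (fun k => |extend e lam 0 k| ^ min p 1)
      = extend e (fun i => |lam i| ^ min p 1) 0 := by
    ext k
    by_cases hk : ∃ i, e i = k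
    · obtain ⟨i, rfl⟩ := hk
      simp only [he.extend_apply]
    · simp [extend_apply' _ _ _ hk, Real.zero_rpow hq]
  refine ⟨extend e lam 0, extend e A 0, ⟨fun k => ?_, ?_, ?_⟩, ?_⟩
  · by_cases hk : ∃ i, e i = k
    · obtain ⟨i, rfl⟩ := hk
      rw [he.extend_apply]
      exact hA i
    · rw [extend_apply' _ _ _ hk]
      exact isBlock_zero α
  · rwa [hcoeff, summable_extend_zero he]
  · filter_upwards [hf] with x hx
    rwa [hterm, hasSum_extend_zero he]
  · rw [hcoeff, tsum_extend_zero he]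

theorem exists_isBlock_inv_smul_indicator (hp : 0 < p) (hp1 : p ≤ 1)
    (hps : ENNReal.ofReal p < s) {f : Rn n → ℝ} (hf : Measurable f) {S : Set (Rn n)}
    (hS : MeasurableSet S) {x₀ : Rn n} {r : ℝ} (hr : 0 < r) (hSB : S ⊆ closedBall x₀ r)
    (hBS : volume (closedBall x₀ r) ≤ 2 * volume S) {c : ℝ}
    (hfc : ∀ x ∈ S, |f x| ∈ Set.Ioc (c / 2) c) :
    ∃ lam > 0, IsBlock n p s 0 (lam⁻¹ • S.indicator f) ∧
      ENNReal.ofReal (lam ^ p) ≤ 4 * ∫⁻ x in S, ‖f x‖ₑ ^ p := by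
  have hB0 := (measure_closedBall_pos volume x₀ hr).ne'
  have hS0 : volume S ≠ 0 := fun h => hB0 (le_antisymm (by simpa [h] using hBS) zero_le)
  have hSt : volume S ≠ ∞ := ((measure_mono hSB).trans_lt measure_closedBall_lt_top).ne
  have hc : 0 < c := by
    obtain ⟨x, hx⟩ := nonempty_of_measure_ne_zero hS0
    linarith [(hfc x hx).1, (hfc x hx).2, abs_nonneg (f x)]
  set M := c * (volume S).toReal ^ s.toReal⁻¹
  have hM : 0 < M := mul_pos hc (Real.rpow_pos_of_pos (toReal_pos hS0 hSt) _)
  have hSf : eLpNorm (S.indicator f) s volume ≤ ENNReal.ofReal M := by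
    rw [eLpNorm_indicator_eq_eLpNorm_restrict hS]
    refine (eLpNorm_le_of_ae_bound (ae_restrict_of_forall_mem hS fun x hx =>
      (Real.norm_eq_abs (f x)).trans_le (hfc x hx).2)).trans_eq ?_
    rw [Measure.restrict_apply_univ, ENNReal.ofReal_mul hc.le,
      ← ENNReal.ofReal_rpow_of_pos (toReal_pos hS0 hSt), ofReal_toReal hSt, mul_comm]
  refine ⟨_, mul_pos hM (Real.rpow_pos_of_pos (toReal_pos hB0 measure_closedBall_lt_top.ne) _),
    isBlock_inv_smul (hf.indicator hS) hr
      (fun x hx => Set.indicator_of_notMem (fun h => hx (hSB h)) f) hM hSf, ?_⟩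
  simp only [M, zero_div, zero_add]
  exact ofReal_rpow_coeff_le_four_mul_setLIntegral hp hp1 (by positivity)
    (ENNReal.toReal_inv_mul_le_one_of_ofReal_lt hp.le hps) hS hS0 hSt hBS hc.le
    fun x hx => (hfc x hx).1.le

theorem exists_isBLDecomp_of_pieces (hp : 0 < p) (hp1 : p ≤ 1) (hps : ENNReal.ofReal p < s)
    {f : Rn n → ℝ} (hf : Measurable f) (hfp : eLpNorm f (ENNReal.ofReal p) volume < ∞)
    {ι : Type*} [Countable ι] {S : ι → Set (Rn n)} (hS : ∀ i, MeasurableSet (S i))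
    (hdisj : Pairwise (Disjoint on S)) (hcover : ∀ᵐ x, f x ≠ 0 → x ∈ ⋃ i, S i)
    {x₀ : ι → Rn n} {r : ι → ℝ} (hr : ∀ i, 0 < r i) (hSB : ∀ i, S i ⊆ closedBall (x₀ i) (r i))
    (hBS : ∀ i, volume (closedBall (x₀ i) (r i)) ≤ 2 * volume (S i))
    {c : ι → ℝ} (hfc : ∀ i, ∀ x ∈ S i, |f x| ∈ Set.Ioc (c i / 2) (c i)) :
    ∃ l a, IsBLDecomp n p s 0 f l a ∧
      ENNReal.ofReal (∑' k, |l k| ^ min p 1) ≤ 4 * eLpNorm f (ENNReal.ofReal p) volume ^ p := by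
  choose lam hlam hA hlam_le using fun i =>
    exists_isBlock_inv_smul_indicator hp hp1 hps hf (hS i) (hr i) (hSB i) (hBS i) (hfc i)
  have htotal : ∑' i, ENNReal.ofReal (lam i ^ p) ≤ 4 * eLpNorm f (ENNReal.ofReal p) volume ^ p :=
    calc ∑' i, ENNReal.ofReal (lam i ^ p) ≤ ∑' i, 4 * ∫⁻ x in S i, ‖f x‖ₑ ^ p :=
          ENNReal.tsum_le_tsum hlam_le
      _ = 4 * ∫⁻ x in ⋃ i, S i, ‖f x‖ₑ ^ p := by
          rw [ENNReal.tsum_mul_left, lintegral_iUnion hS hdisj]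
      _ ≤ 4 * eLpNorm f (ENNReal.ofReal p) volume ^ p := by
          rw [eLpNorm_ofReal_rpow_eq_lintegral hp]
          gcongr
          exact Measure.restrict_le_self
  have habs (i : ι) : |lam i| ^ min p 1 = lam i ^ p := by rw [abs_of_pos (hlam i), min_eq_left hp1]
  have hsummable : Summable fun i => lam i ^ p := by
    simpa [toReal_ofReal (Real.rpow_nonneg (hlam _).le p)] using ENNReal.summable_toReal
      (ne_top_of_le_ne_top (mul_ne_top ofNat_ne_top (rpow_ne_top_of_nonneg hp.le hfp.ne)) htotal)
  have hhasSum : ∀ᵐ x, HasSum (fun i => lam i * ((lam i)⁻¹ • (S i).indicator f) x) (f x) := by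
    filter_upwards [hcover] with x hx
    convert hasSum_indicator_of_pairwise_disjoint hdisj f hx with i
    rw [Pi.smul_apply, smul_eq_mul, mul_inv_cancel_left₀ (hlam i).ne']
  obtain ⟨l, a, hla, hsum⟩ := exists_isBLDecomp_of_countable hp.ne' hA
    (by simpa only [habs] using hsummable) hhasSum
  refine ⟨l, a, hla, ?_⟩
  rwa [hsum, tsum_congr habs,
    ENNReal.ofReal_tsum_of_nonneg (fun i => Real.rpow_nonneg (hlam i).le p) hsummable]

theorem exists_isBLDecomp_of_eLpNorm_lt_top (hp : 0 < p) (hp1 : p ≤ 1)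
    (hps : ENNReal.ofReal p < s) {f : Rn n → ℝ} (hf : Measurable f)
    (hfp : eLpNorm f (ENNReal.ofReal p) volume < ∞) :
    ∃ l a, IsBLDecomp n p s 0 f l a ∧
      ENNReal.ofReal (∑' k, |l k| ^ min p 1) ≤ 4 * eLpNorm f (ENNReal.ofReal p) volume ^ p := by
  set E : ℤ → Set (Rn n) := fun j => (fun x => |f x|) ⁻¹' Set.Ioc (2 ^ j) (2 ^ (j + 1))
  choose t r ht hr hdens hnull hdisj using fun j =>
    exists_disjoint_closedBall_covering_ae_of_half_density volume (E j)
  have (j : ℤ) : Countable (t j) := (ht j).to_subtype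
  have hdyadic : Pairwise (Disjoint on fun j : ℤ => Set.Ioc ((2 : ℝ) ^ j) (2 ^ (j + 1))) := by
    simpa only [Order.succ_eq_add_one] using
      (zpow_right_mono₀ (one_le_two : (1 : ℝ) ≤ 2)).pairwise_disjoint_on_Ioc_succ
  refine exists_isBLDecomp_of_pieces hp hp1 hps hf hfp (ι := (j : ℤ) × t j)
    (S := fun i => E i.1 ∩ closedBall i.2 (r i.1 i.2)) (c := fun i => 2 ^ (i.1 + 1))
    (fun i => (hf.abs measurableSet_Ioc).inter measurableSet_closedBall)
    (pairwise_disjoint_sigma_inter (fun j j' h => (hdyadic h).preimage _)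
      fun j => (hdisj j).subtype)
    ?_ (fun i => hr i.1 i.2 i.2.2) (fun i => Set.inter_subset_right)
    (fun i => hdens i.1 i.2 i.2.2) ?_
  · filter_upwards [measure_eq_zero_iff_ae_notMem.1 (measure_iUnion_null hnull)] with x hx hfx
    obtain ⟨j, hj⟩ := exists_mem_Ioc_zpow (abs_pos.2 hfx) one_lt_two
    obtain ⟨y, hy, hxy⟩ := Set.mem_iUnion₂.1 (by_contra fun h => hx (Set.mem_iUnion.2 ⟨j, hj, h⟩))
    exact Set.mem_iUnion.2 ⟨⟨j, y, hy⟩, hj, hxy⟩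
  · rintro ⟨j, q⟩ x ⟨hx, -⟩
    rwa [zpow_add_one₀ two_ne_zero, mul_div_cancel_right₀ _ two_ne_zero,
      ← zpow_add_one₀ two_ne_zero]

theorem IsBLDecomp.eLpNorm_le (hp : 0 < p) (hp1 : p ≤ 1) (hps : ENNReal.ofReal p < s)
    {f : Rn n → ℝ} {l : ℕ → ℝ} {a : ℕ → Rn n → ℝ} (h : IsBLDecomp n p s 0 f l a) :
    eLpNorm f (ENNReal.ofReal p) volume
      ≤ ENNReal.ofReal ((∑' k, |l k| ^ min p 1) ^ (min p 1)⁻¹) := by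
  rw [min_eq_left hp1, ← ENNReal.ofReal_rpow_of_nonneg (by positivity) (by positivity),
    ← ENNReal.rpow_le_rpow_iff hp, ← ENNReal.rpow_mul, inv_mul_cancel₀ hp.ne', ENNReal.rpow_one]
  exact h.eLpNorm_rpow_le hp hp1 hps

theorem MemBL.memLp (hp : 0 < p) (hp1 : p ≤ 1) (hps : ENNReal.ofReal p < s) {f : Rn n → ℝ}
    (hf : Measurable f) (hBL : MemBL n p s 0 f) : MemLp f (ENNReal.ofReal p) volume :=
  let ⟨_, _, h⟩ := hBL
  ⟨hf.aestronglyMeasurable, (h.eLpNorm_le hp hp1 hps).trans_lt ofReal_lt_top⟩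

theorem BLnorm_le {α : ℝ} {f : Rn n → ℝ} {l : ℕ → ℝ} {a : ℕ → Rn n → ℝ}
    (h : IsBLDecomp n p s α f l a) : BLnorm n p s α f ≤ (∑' k, |l k| ^ min p 1) ^ (min p 1)⁻¹ :=
  csInf_le ⟨0, by rintro _ ⟨l, a, -, rfl⟩; positivity⟩ ⟨l, a, h, rfl⟩

theorem le_BLnorm {α c : ℝ} {f : Rn n → ℝ} (hf : MemBL n p s α f)
    (h : ∀ l a, IsBLDecomp n p s α f l a → c ≤ (∑' k, |l k| ^ min p 1) ^ (min p 1)⁻¹) :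
    c ≤ BLnorm n p s α f :=
  le_csInf (let ⟨l, a, hla⟩ := hf; ⟨_, l, a, hla, rfl⟩)
    (by rintro _ ⟨l, a, hla, rfl⟩; exact h l a hla)

theorem eLpNorm_le_BLnorm (hp : 0 < p) (hp1 : p ≤ 1) (hps : ENNReal.ofReal p < s)
    {f : Rn n → ℝ} (hf : Measurable f) (hBL : MemBL n p s 0 f) :
    eLpNorm f (ENNReal.ofReal p) volume ≤ ENNReal.ofReal (BLnorm n p s 0 f) := by
  rw [← ofReal_toReal (hBL.memLp hp hp1 hps hf).2.ne]
  exact ofReal_le_ofReal (le_BLnorm hBL fun l a h =>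
    toReal_le_of_le_ofReal (by positivity) (h.eLpNorm_le hp hp1 hps))

theorem BLnorm_le_eLpNorm (hp : 0 < p) (hp1 : p ≤ 1) (hps : ENNReal.ofReal p < s)
    {f : Rn n → ℝ} (hf : Measurable f) (hfp : eLpNorm f (ENNReal.ofReal p) volume < ∞) :
    BLnorm n p s 0 f ≤ 4 ^ p⁻¹ * (eLpNorm f (ENNReal.ofReal p) volume).toReal := by
  obtain ⟨l, a, h, hsum⟩ := exists_isBLDecomp_of_eLpNorm_lt_top hp hp1 hps hf hfp
  set T := (eLpNorm f (ENNReal.ofReal p) volume).toReal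
  rw [min_eq_left hp1, ofReal_le_iff_le_toReal (mul_ne_top ofNat_ne_top
    (rpow_ne_top_of_nonneg hp.le hfp.ne)), toReal_mul, ← toReal_rpow] at hsum
  calc BLnorm n p s 0 f ≤ (∑' k, |l k| ^ p) ^ p⁻¹ := by simpa [min_eq_left hp1] using BLnorm_le h
    _ ≤ (4 * T ^ p) ^ p⁻¹ := by gcongr; simpa using hsum
    _ = 4 ^ p⁻¹ * T := by
        rw [Real.mul_rpow zero_le_four (by positivity), ← Real.rpow_mul toReal_nonneg,
          mul_inv_cancel₀ hp.ne', Real.rpow_one]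

end Blocks

theorem BL_eq_Lp_general (n : ℕ) (p : ℝ) (s : ℝ≥0∞)
    (hp : 0 < p) (hp1 : p ≤ 1) (hps : ENNReal.ofReal p < s) :
    ∃ C > (0 : ℝ), ∀ f : Rn n → ℝ, Measurable f →
      ((MemLp f (ENNReal.ofReal p) volume ↔ MemBL n p s 0 f) ∧
       (MemBL n p s 0 f →
         eLpNorm f (ENNReal.ofReal p) volume ≤ ENNReal.ofReal (C * BLnorm n p s 0 f) ∧
         BLnorm n p s 0 f ≤ C * (eLpNorm f (ENNReal.ofReal p) volume).toReal)) := by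
  refine ⟨4 ^ p⁻¹, by positivity, fun f hf => ⟨⟨fun hLp => ?_, MemBL.memLp hp hp1 hps hf⟩,
    fun hBL => ⟨?_, BLnorm_le_eLpNorm hp hp1 hps hf (hBL.memLp hp hp1 hps hf).2⟩⟩⟩
  · obtain ⟨l, a, h, -⟩ := exists_isBLDecomp_of_eLpNorm_lt_top hp hp1 hps hf hLp.2
    exact ⟨l, a, h⟩
  · refine (eLpNorm_le_BLnorm hp hp1 hps hf hBL).trans (ofReal_le_ofReal ?_)
    exact le_mul_of_one_le_left (Real.sInf_nonneg fun _ ⟨_, _, _, hc⟩ => hc ▸ by positivity)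
      (Real.one_le_rpow (by norm_num) (by positivity))

/-- for `0 < p ≤ 1 < s` (indeed `p < s ≤ ∞`), `BL^{p,s}_{|x|^0} = L^p`
as sets, with equivalent quasinorms. -/
theorem BL_eq_Lp (n : ℕ) (hn : 0 < n) (p : ℝ) (s : ℝ≥0∞)
    (hp : 0 < p) (hp1 : p ≤ 1) (hps : ENNReal.ofReal p < s) :
    ∃ C > (0 : ℝ), ∀ f : Rn n → ℝ, Measurable f →
      ((MemLp f (ENNReal.ofReal p) volume ↔ MemBL n p s 0 f) ∧
       (MemBL n p s 0 f →
         eLpNorm f (ENNReal.ofReal p) volume ≤ ENNReal.ofReal (C * BLnorm n p s 0 f) ∧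
         BLnorm n p s 0 f ≤ C * (eLpNorm f (ENNReal.ofReal p) volume).toReal)) :=
  BL_eq_Lp_general n p s hp hp1 hps
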